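/- Let P be a two-orbit n-polytope in class 2_I, let -1 ≤ r ≤ s ≤ n, and let Q be any section of P determined by an incident r-face and s-face. Then Q is either a regular (s-r-1)-polytope or a two-orbit (s-r-1)-polytope in the class 2_{I'}, where I' = (I ∩ {r+1,...,s-1}) - (r+1) (the shift of I ∩ {r+1,...,s-1} down by r+1). -/
import Mathlib


/-- An abstract polytope of rank `n`, presented by a partially ordered type of faces
with a strictly monotone rank function onto `{-1, 0, ..., n}`, such that every flag
(maximal chain) has exactly one face of each rank (`faceAt`), every flag has a unique
`i`-adjacent flag for each `i = 0, ..., n-1` (the diamond condition, via `adj`), and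
which is strongly flag-connected. -/
structure AbstractPolytope (n : ℕ) (Face : Type*) [PartialOrder Face] where
  rank : Face → ℤ
  rank_strictMono : ∀ {F G : Face}, F < G → rank F < rank G
  rank_le : ∀ F : Face, -1 ≤ rank F ∧ rank F ≤ (n : ℤ)
  /-- the unique face of rank `i` in the flag `Φ`, for `-1 ≤ i ≤ n` -/
  faceAt : Flag Face → ℤ → Face
  faceAt_mem : ∀ (Φ : Flag Face) (i : ℤ), -1 ≤ i → i ≤ (n : ℤ) → faceAt Φ i ∈ Φ
  faceAt_rank : ∀ (Φ : Flag Face) (i : ℤ), -1 ≤ i → i ≤ (n : ℤ) → rank (faceAt Φ i) = i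
  faceAt_eq : ∀ (Φ : Flag Face) (F : Face), F ∈ Φ → faceAt Φ (rank F) = F
  /-- the unique `i`-adjacent flag of `Φ`, for `0 ≤ i ≤ n-1` -/
  adj : Flag Face → ℕ → Flag Face
  adj_ne : ∀ (Φ : Flag Face) (i : ℕ), i < n → adj Φ i ≠ Φ
  adj_mem : ∀ (Φ : Flag Face) (i : ℕ), i < n →
    ∀ F ∈ Φ, rank F ≠ (i : ℤ) → F ∈ adj Φ i
  adj_unique : ∀ (Φ Ψ : Flag Face) (i : ℕ), i < n → Ψ ≠ Φ →
    (∀ F ∈ Φ, rank F ≠ (i : ℤ) → F ∈ Ψ) → Ψ = adj Φ i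
  /-- strong flag-connectedness: any two flags are joined by a sequence of successively
  adjacent flags, with all adjacencies at ranks not occurring among their common faces -/
  connected : ∀ Φ Ψ : Flag Face, ∃ (l : ℕ) (c : ℕ → Flag Face), c 0 = Φ ∧ c l = Ψ ∧
    ∀ m < l, ∃ i : ℕ, i < n ∧ c (m + 1) = adj (c m) i ∧
      ∀ F : Face, F ∈ Φ → F ∈ Ψ → rank F ≠ (i : ℤ)

namespace AbstractPolytope

variable {n : ℕ} {Face : Type*} [PartialOrder Face]

/-- The automorphism group `Γ(P)`: order automorphisms of the set of faces.
It acts on flags via `Flag.map`; `g • Φ` denotes the image flag. -/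
instance : MulAction (Face ≃o Face) (Flag Face) where
  smul g Φ := Flag.map g Φ
  one_smul Φ := by
    show Flag.map 1 Φ = Φ
    ext x
    simp [Flag.map, Flag.ofIsMaxChain]
  mul_smul g h Φ := by
    show Flag.map (g * h) Φ = Flag.map g (Flag.map h Φ)
    ext x
    simp [Flag.map, Flag.ofIsMaxChain, Set.image_image]

lemma smul_flag_def (g : Face ≃o Face) (Φ : Flag Face) : g • Φ = Flag.map g Φ := rfl

/-- Two flags lie in the same orbit under the automorphism group. -/
def SameOrbit (Φ Ψ : Flag Face) : Prop := ∃ g : Face ≃o Face, g • Φ = Ψ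

/-- The polytope has exactly two orbits on flags. -/
def TwoOrbit (_A : AbstractPolytope n Face) : Prop :=
  ∃ Φ Ψ : Flag Face, ¬ SameOrbit Φ Ψ ∧ ∀ X : Flag Face, SameOrbit X Φ ∨ SameOrbit X Ψ

/-- `I` is the class type set of the two-orbit polytope `A`: it consists precisely of
those ranks `i ∈ {0,...,n-1}` such that every flag and its `i`-adjacent flag lie in the
same orbit; that is, `A` is in the class `2_I`. -/
def InClass (A : AbstractPolytope n Face) (I : Set ℕ) : Prop :=
  (∀ i ∈ I, i < n) ∧ ∀ i : ℕ, i < n → (i ∈ I ↔ ∀ Φ : Flag Face, SameOrbit Φ (A.adj Φ i))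

/-- The stabilizer in the automorphism group of a face `F`. -/
def faceStab (_A : AbstractPolytope n Face) (F : Face) : Subgroup (Face ≃o Face) where
  carrier := {g : Face ≃o Face | g F = F}
  one_mem' := rfl
  mul_mem' := by
    intro a b ha hb
    show (a * b) F = F
    rw [RelIso.mul_apply]
    rw [show b F = F from hb, show a F = F from ha]
  inv_mem' := by
    intro a ha
    show a⁻¹ F = F
    conv_lhs => rw [← show a F = F from ha]
    exact a.symm_apply_apply F

lemma mem_faceStab {A : AbstractPolytope n Face} {F : Face} {g : Face ≃o Face} :
    g ∈ A.faceStab F ↔ g F = F := Iff.rfl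

section Generic

variable {α : Type*} [PartialOrder α]

lemma flag_mem_smul_iff {g : α ≃o α} {Φ : Flag α} {K : α} :
    K ∈ g • Φ ↔ g.symm K ∈ Φ := by
  rw [smul_flag_def, ← Flag.mem_coe_iff, Flag.coe_map]
  constructor
  · rintro ⟨x, hx, rfl⟩
    rwa [g.symm_apply_apply]
  · intro h
    exact ⟨g.symm K, h, g.apply_symm_apply K⟩

lemma sameOrbit_refl (Φ : Flag α) : SameOrbit Φ Φ := ⟨1, one_smul _ _⟩

lemma sameOrbit_symm {Φ Ψ : Flag α} : SameOrbit Φ Ψ → SameOrbit Ψ Φ :=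
  fun ⟨g, h⟩ => ⟨g⁻¹, by rw [← h, inv_smul_smul]⟩

lemma sameOrbit_trans {Φ Ψ X : Flag α} : SameOrbit Φ Ψ → SameOrbit Ψ X → SameOrbit Φ X :=
  fun ⟨g, h⟩ ⟨g', h'⟩ => ⟨g' * g, by rw [mul_smul, h, h']⟩

lemma exists_mem_flag (K : α) : ∃ Φ : Flag α, K ∈ Φ := by
  have hch : IsChain (· ≤ ·) ({K} : Set α) := Set.subsingleton_singleton.isChain
  obtain ⟨M, hM, hsub⟩ := hch.exists_maxChain
  exact ⟨Flag.ofIsMaxChain M hM, hsub rfl⟩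

lemma sameOrbit_of_iff {X Y : Flag α}
    (hall : ∀ Z : Flag α, SameOrbit Z X ∨ SameOrbit Z Y)
    {Z W : Flag α} (h : SameOrbit Z X ↔ SameOrbit W X) : SameOrbit Z W := by
  by_cases h1 : SameOrbit Z X
  · exact sameOrbit_trans h1 (sameOrbit_symm (h.1 h1))
  · have h2 : ¬ SameOrbit W X := fun hw => h1 (h.2 hw)
    rcases hall Z with hz | hz
    · exact absurd hz h1
    rcases hall W with hw | hw
    · exact absurd hw h2
    exact sameOrbit_trans hz (sameOrbit_symm hw)

end Generic

section Helpers

variable (A : AbstractPolytope n Face)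

lemma eq_of_rank_eq {Φ : Flag Face} {K K' : Face} (hK : K ∈ Φ) (hK' : K' ∈ Φ)
    (h : A.rank K = A.rank K') : K = K' := by
  rw [← A.faceAt_eq Φ K hK, ← A.faceAt_eq Φ K' hK', h]

lemma lt_of_rank_lt {Φ : Flag Face} {K K' : Face} (hK : K ∈ Φ) (hK' : K' ∈ Φ)
    (h : A.rank K < A.rank K') : K < K' := by
  rcases Φ.le_or_le hK hK' with h1 | h1
  · exact lt_of_le_of_ne h1 (fun he => by rw [he] at h; exact lt_irrefl _ h)
  · rcases eq_or_lt_of_le h1 with he | hlt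
    · rw [← he] at h; exact absurd h (lt_irrefl _)
    · exact absurd (A.rank_strictMono hlt) (by omega)

lemma le_rank_app_faceAt (g : Face ≃o Face) (Φ : Flag Face) :
    ∀ i : ℤ, -1 ≤ i → (i ≤ (n : ℤ) → i ≤ A.rank (g (A.faceAt Φ i))) := by
  refine Int.le_induction ?_ ?_
  · intro _
    exact (A.rank_le _).1
  · intro i hi IH hi1
    have hi' : i ≤ (n : ℤ) := by omega
    have hlt : A.faceAt Φ i < A.faceAt Φ (i + 1) := by
      apply A.lt_of_rank_lt (A.faceAt_mem Φ i hi hi') (A.faceAt_mem Φ (i+1) (by omega) hi1)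
      rw [A.faceAt_rank Φ i hi hi', A.faceAt_rank Φ (i+1) (by omega) hi1]
      omega
    have h2 : A.rank (g (A.faceAt Φ i)) < A.rank (g (A.faceAt Φ (i+1))) :=
      A.rank_strictMono (g.strictMono hlt)
    have := IH hi'
    omega

lemma rank_app_faceAt (g : Face ≃o Face) (Φ : Flag Face) (i : ℤ)
    (h1 : -1 ≤ i) (h2 : i ≤ (n : ℤ)) : A.rank (g (A.faceAt Φ i)) = i := by
  have hle := A.le_rank_app_faceAt g Φ i h1 h2
  have hmem : g (A.faceAt Φ i) ∈ g • Φ :=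
    flag_mem_smul_iff.2 (by rw [g.symm_apply_apply]; exact A.faceAt_mem Φ i h1 h2)
  have hjb := A.rank_le (g (A.faceAt Φ i))
  have hfe : A.faceAt (g • Φ) (A.rank (g (A.faceAt Φ i))) = g (A.faceAt Φ i) :=
    A.faceAt_eq _ _ hmem
  have h2' := A.le_rank_app_faceAt g.symm (g • Φ) (A.rank (g (A.faceAt Φ i))) hjb.1 hjb.2
  rw [hfe, g.symm_apply_apply, A.faceAt_rank Φ i h1 h2] at h2'
  omega

lemma rank_smul (g : Face ≃o Face) (K : Face) : A.rank (g K) = A.rank K := by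
  obtain ⟨Φ, hΦ⟩ := exists_mem_flag K
  have hb := A.rank_le K
  have := A.rank_app_faceAt g Φ (A.rank K) hb.1 hb.2
  rwa [A.faceAt_eq Φ K hΦ] at this

lemma smul_adj (g : Face ≃o Face) (Φ : Flag Face) (i : ℕ) (hi : i < n) :
    g • A.adj Φ i = A.adj (g • Φ) i := by
  apply A.adj_unique _ _ _ hi
  · intro h
    apply A.adj_ne Φ i hi
    have h2 := congrArg (fun Ψ => g⁻¹ • Ψ) h
    simpa [inv_smul_smul] using h2
  · intro K hK hrk
    rw [flag_mem_smul_iff] at hK ⊢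
    apply A.adj_mem Φ i hi _ hK
    rwa [← A.rank_smul g.symm K] at hrk

lemma faceAt_adj (Φ : Flag Face) (i : ℕ) (hi : i < n) (j : ℤ)
    (hj1 : -1 ≤ j) (hj2 : j ≤ (n : ℤ)) (hne : j ≠ (i : ℤ)) :
    A.faceAt (A.adj Φ i) j = A.faceAt Φ j := by
  have h1 : A.faceAt Φ j ∈ A.adj Φ i :=
    A.adj_mem Φ i hi _ (A.faceAt_mem Φ j hj1 hj2)
      (by rw [A.faceAt_rank Φ j hj1 hj2]; exact hne)
  have := A.faceAt_eq (A.adj Φ i) _ h1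
  rwa [A.faceAt_rank Φ j hj1 hj2] at this

lemma adj_adj (Φ : Flag Face) (i : ℕ) (hi : i < n) : A.adj (A.adj Φ i) i = Φ := by
  symm
  apply A.adj_unique _ _ _ hi (Ne.symm (A.adj_ne Φ i hi))
  intro K hK hrk
  have hb := A.rank_le K
  have h1 : K = A.faceAt (A.adj Φ i) (A.rank K) := (A.faceAt_eq _ _ hK).symm
  rw [A.faceAt_adj Φ i hi (A.rank K) hb.1 hb.2 hrk] at h1
  rw [h1]
  exact A.faceAt_mem Φ (A.rank K) hb.1 hb.2

lemma sameOrbit_adj_all (h2 : A.TwoOrbit) {i : ℕ} (hi : i < n)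
    (hex : ∃ Φ : Flag Face, SameOrbit Φ (A.adj Φ i)) :
    ∀ Ψ : Flag Face, SameOrbit Ψ (A.adj Ψ i) := by
  obtain ⟨Φ, hΦ⟩ := hex
  obtain ⟨X, Y, hXY, hall⟩ := h2
  intro Ψ
  by_cases h : SameOrbit Ψ Φ
  · obtain ⟨g, hg⟩ := h
    have hadj : SameOrbit (A.adj Ψ i) (A.adj Φ i) :=
      ⟨g, by rw [A.smul_adj g Ψ i hi, hg]⟩
    exact sameOrbit_trans ⟨g, hg⟩ (sameOrbit_trans hΦ (sameOrbit_symm hadj))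
  · by_contra hc
    have h3 : SameOrbit (A.adj Ψ i) Φ := by
      rcases hall Ψ with h1 | h1 <;> rcases hall (A.adj Ψ i) with h2' | h2' <;>
        rcases hall Φ with h4 | h4
      all_goals first
        | exact sameOrbit_trans h2' (sameOrbit_symm h4)
        | exact absurd (sameOrbit_trans h1 (sameOrbit_symm h4)) h
        | exact absurd (sameOrbit_trans h1 (sameOrbit_symm h2')) hc
    obtain ⟨g, hg⟩ := h3
    have h4 : SameOrbit Ψ (A.adj Φ i) :=
      ⟨g, by rw [← A.adj_adj Ψ i hi, A.smul_adj g (A.adj Ψ i) i hi, hg]⟩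
    exact h (sameOrbit_trans h4 (sameOrbit_symm hΦ))

lemma not_sameOrbit_adj (h2 : A.TwoOrbit) {I : Set ℕ} (hI : A.InClass I)
    {i : ℕ} (hi : i < n) (hni : i ∉ I) :
    ∀ Φ : Flag Face, ¬ SameOrbit Φ (A.adj Φ i) := by
  intro Φ h
  exact hni ((hI.2 i hi).2 (A.sameOrbit_adj_all h2 hi ⟨Φ, h⟩))

end Helpers
section Sect

variable {F G : Face}

lemma bot_mem_sect (hFG : F ≤ G) (Φ' : Flag {H : Face // F ≤ H ∧ H ≤ G}) :
    (⟨F, le_refl F, hFG⟩ : {H : Face // F ≤ H ∧ H ≤ G}) ∈ Φ' :=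
  Flag.mem_iff_forall_le_or_ge.2 fun b hb => Or.inl b.2.1

lemma top_mem_sect (hFG : F ≤ G) (Φ' : Flag {H : Face // F ≤ H ∧ H ≤ G}) :
    (⟨G, hFG, le_refl G⟩ : {H : Face // F ≤ H ∧ H ≤ G}) ∈ Φ' :=
  Flag.mem_iff_forall_le_or_ge.2 fun b hb => Or.inr b.2.2

/-- Extension of a section flag by a fixed outer part from a base flag `Φ₀`. -/
def extSet (Φ₀ : Flag Face) (Φ' : Flag {H : Face // F ≤ H ∧ H ≤ G}) : Set Face :=
  (Subtype.val '' (Φ' : Set {H : Face // F ≤ H ∧ H ≤ G})) ∪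
    {K | K ∈ Φ₀ ∧ (K ≤ F ∨ G ≤ K)}

lemma extSet_isMaxChain (hFG : F ≤ G) {Φ₀ : Flag Face} (hF₀ : F ∈ Φ₀) (hG₀ : G ∈ Φ₀)
    (Φ' : Flag {H : Face // F ≤ H ∧ H ≤ G}) :
    IsMaxChain (· ≤ ·) (extSet Φ₀ Φ') := by
  constructor
  · rintro a (⟨x, hx, rfl⟩ | ⟨haΦ, ha⟩) b (⟨y, hy, rfl⟩ | ⟨hbΦ, hb⟩) hne
    · rcases Φ'.le_or_le hx hy with h | h
      · exact Or.inl h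
      · exact Or.inr h
    · rcases hb with hb | hb
      · exact Or.inr (hb.trans x.2.1)
      · exact Or.inl (x.2.2.trans hb)
    · rcases ha with ha | ha
      · exact Or.inl (ha.trans y.2.1)
      · exact Or.inr (y.2.2.trans ha)
    · exact Φ₀.le_or_le haΦ hbΦ
  · intro t ht hsub
    refine Set.Subset.antisymm hsub fun x hx => ?_
    have hFmem : F ∈ extSet Φ₀ Φ' := Or.inr ⟨hF₀, Or.inl le_rfl⟩
    have hGmem : G ∈ extSet Φ₀ Φ' := Or.inr ⟨hG₀, Or.inr le_rfl⟩
    have cF : x ≤ F ∨ F ≤ x := by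
      by_cases he : x = F
      · exact Or.inl he.le
      · exact ht hx (hsub hFmem) he
    have cG : x ≤ G ∨ G ≤ x := by
      by_cases he : x = G
      · exact Or.inl he.le
      · exact ht hx (hsub hGmem) he
    by_cases hmid : F ≤ x ∧ x ≤ G
    · left
      refine ⟨⟨x, hmid⟩, ?_, rfl⟩
      rw [Flag.mem_coe_iff, Flag.mem_iff_forall_le_or_ge]
      intro b hb
      have hbt : (b : Face) ∈ t := hsub (Or.inl ⟨b, hb, rfl⟩)
      by_cases he : x = (b : Face)
      · exact Or.inl (le_of_eq (Subtype.ext he))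
      · rcases ht hx hbt he with h | h
        · exact Or.inl h
        · exact Or.inr h
    · right
      have hxOr : x ≤ F ∨ G ≤ x := by
        rcases cF with h | h
        · exact Or.inl h
        rcases cG with h' | h'
        · exact absurd ⟨h, h'⟩ hmid
        · exact Or.inr h'
      refine ⟨?_, hxOr⟩
      rw [Flag.mem_iff_forall_le_or_ge]
      intro K hK
      by_cases hKO : K ≤ F ∨ G ≤ K
      · have hKt : K ∈ t := hsub (Or.inr ⟨hK, hKO⟩)
        by_cases he : x = K
        · exact Or.inl he.le
        · exact ht hx hKt he
      · push_neg at hKO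
        rcases hxOr with h | h
        · rcases Φ₀.le_or_le hK hF₀ with h' | h'
          · exact absurd h' hKO.1
          · exact Or.inl (h.trans h')
        · rcases Φ₀.le_or_le hK hG₀ with h' | h'
          · exact Or.inr (h'.trans h)
          · exact absurd h' hKO.2

/-- The extension of a section flag to a flag of the whole polytope. -/
def extFlag (hFG : F ≤ G) {Φ₀ : Flag Face} (hF₀ : F ∈ Φ₀) (hG₀ : G ∈ Φ₀)
    (Φ' : Flag {H : Face // F ≤ H ∧ H ≤ G}) : Flag Face :=
  Flag.ofIsMaxChain _ (extSet_isMaxChain hFG hF₀ hG₀ Φ')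

lemma mem_extFlag (hFG : F ≤ G) {Φ₀ : Flag Face} (hF₀ : F ∈ Φ₀) (hG₀ : G ∈ Φ₀)
    (Φ' : Flag {H : Face // F ≤ H ∧ H ≤ G}) {K : Face} :
    K ∈ extFlag hFG hF₀ hG₀ Φ' ↔ K ∈ extSet Φ₀ Φ' := Iff.rfl

lemma F_mem_extFlag (hFG : F ≤ G) {Φ₀ : Flag Face} (hF₀ : F ∈ Φ₀) (hG₀ : G ∈ Φ₀)
    (Φ' : Flag {H : Face // F ≤ H ∧ H ≤ G}) : F ∈ extFlag hFG hF₀ hG₀ Φ' :=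
  Or.inr ⟨hF₀, Or.inl le_rfl⟩

lemma G_mem_extFlag (hFG : F ≤ G) {Φ₀ : Flag Face} (hF₀ : F ∈ Φ₀) (hG₀ : G ∈ Φ₀)
    (Φ' : Flag {H : Face // F ≤ H ∧ H ≤ G}) : G ∈ extFlag hFG hF₀ hG₀ Φ' :=
  Or.inr ⟨hG₀, Or.inr le_rfl⟩

lemma mem_ext_iff (hFG : F ≤ G) {Φ₀ : Flag Face} (hF₀ : F ∈ Φ₀) (hG₀ : G ∈ Φ₀)
    (Φ' : Flag {H : Face // F ≤ H ∧ H ≤ G}) (H : {H : Face // F ≤ H ∧ H ≤ G}) :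
    H ∈ Φ' ↔ (H : Face) ∈ extFlag hFG hF₀ hG₀ Φ' := by
  constructor
  · intro h
    exact Or.inl ⟨H, h, rfl⟩
  · rintro (⟨x, hx, hxe⟩ | ⟨h₀, hor⟩)
    · rwa [← Subtype.ext hxe]
    · rcases hor with h | h
      · have he : H = ⟨F, le_refl F, hFG⟩ := Subtype.ext (le_antisymm h H.2.1)
        rw [he]; exact bot_mem_sect hFG Φ'
      · have he : H = ⟨G, hFG, le_refl G⟩ := Subtype.ext (le_antisymm H.2.2 h)
        rw [he]; exact top_mem_sect hFG Φ'

lemma extFlag_inj (hFG : F ≤ G) {Φ₀ : Flag Face} (hF₀ : F ∈ Φ₀) (hG₀ : G ∈ Φ₀)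
    {Φ' Ψ' : Flag {H : Face // F ≤ H ∧ H ≤ G}}
    (h : extFlag hFG hF₀ hG₀ Φ' = extFlag hFG hF₀ hG₀ Ψ') : Φ' = Ψ' := by
  refine Flag.ext (Set.ext fun H => ?_)
  rw [Flag.mem_coe_iff, Flag.mem_coe_iff, mem_ext_iff hFG hF₀ hG₀ Φ' H,
    mem_ext_iff hFG hF₀ hG₀ Ψ' H, h]

lemma ext_adj (A : AbstractPolytope n Face) (hFG : F ≤ G) {Φ₀ : Flag Face}
    (hF₀ : F ∈ Φ₀) (hG₀ : G ∈ Φ₀) {m : ℤ} (hm0 : 0 ≤ m) (hmn : m < (n : ℤ))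
    {Φ' Ψ' : Flag {H : Face // F ≤ H ∧ H ≤ G}} (hne : Φ' ≠ Ψ')
    (hshare : ∀ H, H ∈ Φ' → A.rank (H : Face) ≠ m → H ∈ Ψ') :
    extFlag hFG hF₀ hG₀ Ψ' = A.adj (extFlag hFG hF₀ hG₀ Φ') m.toNat := by
  have hcast : ((m.toNat : ℕ) : ℤ) = m := Int.toNat_of_nonneg hm0
  have hlt : m.toNat < n := by omega
  apply A.adj_unique _ _ _ hlt
  · intro h
    exact hne (extFlag_inj hFG hF₀ hG₀ h).symm
  · intro K hK hrk
    rw [hcast] at hrk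
    rcases hK with ⟨x, hx, rfl⟩ | hO
    · exact Or.inl ⟨x, hshare x hx hrk, rfl⟩
    · exact Or.inr hO

lemma sect_orbit_of_ext (A : AbstractPolytope n Face) (hFG : F ≤ G) {Φ₀ : Flag Face}
    (hF₀ : F ∈ Φ₀) (hG₀ : G ∈ Φ₀)
    {Φ' Ψ' : Flag {H : Face // F ≤ H ∧ H ≤ G}}
    (h : SameOrbit (extFlag hFG hF₀ hG₀ Φ') (extFlag hFG hF₀ hG₀ Ψ')) :
    SameOrbit Φ' Ψ' := by
  obtain ⟨g, hg⟩ := h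
  have hgF : g F = F := by
    refine A.eq_of_rank_eq (Φ := extFlag hFG hF₀ hG₀ Ψ') ?_
      (F_mem_extFlag hFG hF₀ hG₀ Ψ') (A.rank_smul g F)
    rw [← hg]
    exact flag_mem_smul_iff.2
      (by rw [g.symm_apply_apply]; exact F_mem_extFlag hFG hF₀ hG₀ Φ')
  have hgG : g G = G := by
    refine A.eq_of_rank_eq (Φ := extFlag hFG hF₀ hG₀ Ψ') ?_
      (G_mem_extFlag hFG hF₀ hG₀ Ψ') (A.rank_smul g G)
    rw [← hg]
    exact flag_mem_smul_iff.2
      (by rw [g.symm_apply_apply]; exact G_mem_extFlag hFG hF₀ hG₀ Φ')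
  have hgF' : g.symm F = F := g.symm_apply_eq.2 hgF.symm
  have hgG' : g.symm G = G := g.symm_apply_eq.2 hgG.symm
  let g' : {H : Face // F ≤ H ∧ H ≤ G} ≃o {H : Face // F ≤ H ∧ H ≤ G} :=
    { toFun := fun H => ⟨g H.1, hgF.symm.le.trans (g.le_iff_le.2 H.2.1),
                         (g.le_iff_le.2 H.2.2).trans hgG.le⟩
      invFun := fun H => ⟨g.symm H.1, hgF'.symm.le.trans (g.symm.le_iff_le.2 H.2.1),
                          (g.symm.le_iff_le.2 H.2.2).trans hgG'.le⟩
      left_inv := fun H => Subtype.ext (g.symm_apply_apply H.1)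
      right_inv := fun H => Subtype.ext (g.apply_symm_apply H.1)
      map_rel_iff' := by
        intro a b
        exact g.le_iff_le }
  refine ⟨g', Flag.ext (Set.ext fun H => ?_)⟩
  rw [Flag.mem_coe_iff, Flag.mem_coe_iff, flag_mem_smul_iff,
    mem_ext_iff hFG hF₀ hG₀ Φ' (g'.symm H)]
  have e2 : ((g'.symm H : {H : Face // F ≤ H ∧ H ≤ G}) : Face) = g.symm (H : Face) := rfl
  rw [e2]
  rw [show (g.symm (H : Face) ∈ extFlag hFG hF₀ hG₀ Φ') =
      ((H : Face) ∈ g • extFlag hFG hF₀ hG₀ Φ') from (propext flag_mem_smul_iff).symm]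
  rw [hg]
  exact (mem_ext_iff hFG hF₀ hG₀ Ψ' H).symm

end Sect
end AbstractPolytope

open AbstractPolytope in
/-- Every section `G/F` of a two-orbit polytope in class `2_I`, for
incident faces `F` of rank `r` and `G` of rank `s`, is either regular (flag-transitive
automorphism group) or a two-orbit polytope in the class `2_{I'}` with
`I' = (I ∩ {r+1,...,s-1}) - (r+1)`: it has exactly two flag orbits, and two flags of the
section differing exactly in the face of rank `m` (with `r < m < s`) lie in the same
orbit of the section's automorphism group precisely when `m ∈ I` (that is, when
`m - (r+1) ∈ I'`). -/
theorem stmt14 {n : ℕ} {Face : Type*} [PartialOrder Face] (A : AbstractPolytope n Face)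
    (I : Set ℕ) (h2 : A.TwoOrbit) (hI : A.InClass I)
    (r s : ℤ) (hr : -1 ≤ r) (hrs : r ≤ s) (hs : s ≤ (n : ℤ))
    (F G : Face) (hF : A.rank F = r) (hG : A.rank G = s) (hFG : F ≤ G) :
    (∀ Φ' Ψ' : Flag {H : Face // F ≤ H ∧ H ≤ G}, SameOrbit Φ' Ψ')
    ∨ ((∃ Φ₁ Φ₂ : Flag {H : Face // F ≤ H ∧ H ≤ G}, ¬ SameOrbit Φ₁ Φ₂ ∧
          ∀ X : Flag {H : Face // F ≤ H ∧ H ≤ G}, SameOrbit X Φ₁ ∨ SameOrbit X Φ₂)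
        ∧ ∀ m : ℤ, r < m → m < s →
            ∀ Φ' Ψ' : Flag {H : Face // F ≤ H ∧ H ≤ G}, Φ' ≠ Ψ' →
              (∀ H, H ∈ Φ' → A.rank H.1 ≠ m → H ∈ Ψ') →
              (SameOrbit Φ' Ψ' ↔ ∃ k ∈ I, (k : ℤ) = m)) := by
  classical
  by_cases hreg : ∀ Φ' Ψ' : Flag {H : Face // F ≤ H ∧ H ≤ G}, SameOrbit Φ' Ψ'
  · exact Or.inl hreg
  · right
    -- a base flag containing F and G, providing the fixed outer part
    obtain ⟨Φ₀, hF₀, hG₀⟩ : ∃ Φ₀ : Flag Face, F ∈ Φ₀ ∧ G ∈ Φ₀ := by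
      have hch : IsChain (· ≤ ·) ({F, G} : Set Face) := by
        intro a ha b hb _
        rcases ha with rfl | ha <;> rcases hb with rfl | hb
        · exact Or.inl le_rfl
        · rw [Set.mem_singleton_iff] at hb; subst hb; exact Or.inl hFG
        · rw [Set.mem_singleton_iff] at ha; subst ha; exact Or.inr hFG
        · rw [Set.mem_singleton_iff] at ha hb; subst ha; subst hb; exact Or.inl le_rfl
      obtain ⟨M, hM, hsub⟩ := hch.exists_maxChain
      exact ⟨Flag.ofIsMaxChain M hM, hsub (Or.inl rfl), hsub (Or.inr rfl)⟩
    obtain ⟨X, Y, hXY, hall⟩ := h2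
    have key : ∀ Z W : Flag {H : Face // F ≤ H ∧ H ≤ G},
        (SameOrbit (extFlag hFG hF₀ hG₀ Z) X ↔ SameOrbit (extFlag hFG hF₀ hG₀ W) X) →
        SameOrbit Z W := fun Z W hiff =>
      sect_orbit_of_ext A hFG hF₀ hG₀ (sameOrbit_of_iff hall hiff)
    constructor
    · push_neg at hreg
      obtain ⟨Φ₁, Φ₂, h12⟩ := hreg
      refine ⟨Φ₁, Φ₂, h12, fun Z => ?_⟩
      by_cases hz : SameOrbit (extFlag hFG hF₀ hG₀ Z) X ↔
          SameOrbit (extFlag hFG hF₀ hG₀ Φ₁) X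
      · exact Or.inl (key Z Φ₁ hz)
      · refine Or.inr (key Z Φ₂ ?_)
        have h12' : ¬(SameOrbit (extFlag hFG hF₀ hG₀ Φ₁) X ↔
            SameOrbit (extFlag hFG hF₀ hG₀ Φ₂) X) := fun h => h12 (key Φ₁ Φ₂ h)
        tauto
    · intro m hrm hms Φ' Ψ' hne hshare
      have hm0 : 0 ≤ m := by omega
      have hmn : m < (n : ℤ) := lt_of_lt_of_le hms hs
      have hcast : ((m.toNat : ℕ) : ℤ) = m := Int.toNat_of_nonneg hm0
      have hin : m.toNat < n := by omega
      have hext : extFlag hFG hF₀ hG₀ Ψ' = A.adj (extFlag hFG hF₀ hG₀ Φ') m.toNat :=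
        ext_adj A hFG hF₀ hG₀ hm0 hmn hne hshare
      constructor
      · intro hSO
        by_contra hnk
        push_neg at hnk
        have hiI : m.toNat ∉ I := fun h => hnk m.toNat h hcast
        have hnadj := A.not_sameOrbit_adj ⟨X, Y, hXY, hall⟩ hI hin hiI
            (extFlag hFG hF₀ hG₀ Φ')
        rw [← hext] at hnadj
        have hfne : ¬(SameOrbit (extFlag hFG hF₀ hG₀ Φ') X ↔
            SameOrbit (extFlag hFG hF₀ hG₀ Ψ') X) :=
          fun h => hnadj (sameOrbit_of_iff hall h)
        apply hreg
        intro Z W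
        have hZ : ∀ Z' : Flag {H : Face // F ≤ H ∧ H ≤ G}, SameOrbit Z' Φ' := by
          intro Z'
          by_cases hz : SameOrbit (extFlag hFG hF₀ hG₀ Z') X ↔
              SameOrbit (extFlag hFG hF₀ hG₀ Φ') X
          · exact key Z' Φ' hz
          · have hz2 : SameOrbit (extFlag hFG hF₀ hG₀ Z') X ↔
                SameOrbit (extFlag hFG hF₀ hG₀ Ψ') X := by tauto
            exact sameOrbit_trans (key Z' Ψ' hz2) (sameOrbit_symm hSO)
        exact sameOrbit_trans (hZ Z) (sameOrbit_symm (hZ W))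
      · rintro ⟨k, hkI, hkm⟩
        have hk : k = m.toNat := by omega
        rw [hk] at hkI
        have hadjall := (hI.2 m.toNat hin).1 hkI
        have : SameOrbit (extFlag hFG hF₀ hG₀ Φ') (extFlag hFG hF₀ hG₀ Ψ') := by
          rw [hext]; exact hadjall (extFlag hFG hF₀ hG₀ Φ')
        exact sect_orbit_of_ext A hFG hF₀ hG₀ this
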